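/- The transformation formulas relating (μ₁, μ₂) to the conformal coordinates are mutually inverse: if A = (Z₁+Z₂)/2, B = (Z₁-Z₂)/(2i) with Z₁, Z₂ defined from (μ₁,μ₂) by Z₁ = [(1+|μ₂|²)μ̄₁ + (1+|μ₁|²)μ̄₂ + i((1-|μ₂|²)μ̄₁ - (1-|μ₁|²)μ̄₂)]/(1-|μ₁|²|μ₂|²) and Z₂ the same with -i, then μ₁ = (Ā+B̄)/2 - ((Ā-B̄)/(2|A-B|²))(|A|²-|B|²+2 - √((|A|²-|B|²+2)² - |A-B|²|A+B|²)) and μ₂ = (Ā-B̄)/2 - ((Ā+B̄)/(2|A+B|²))(|A|²-|B|²+2 - √((|A|²-|B|²+2)² - |A-B|²|A+B|²)). -/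

import Mathlib

open Complex

/-- The conformal coordinate map `(μ₁,μ₂) ↦ (Z₁,Z₂)` on the space of oriented geodesics
of hyperbolic 3-space. -/
noncomputable def geodCoord (μ : ℂ × ℂ) : ℂ × ℂ :=
  let m₁ := μ.1; let m₂ := μ.2
  let den : ℂ := 1 - m₁ * (starRingEnd ℂ) m₁ * m₂ * (starRingEnd ℂ) m₂
  let a : ℂ := (1 + m₂ * (starRingEnd ℂ) m₂) * (starRingEnd ℂ) m₁
    + (1 + m₁ * (starRingEnd ℂ) m₁) * (starRingEnd ℂ) m₂
  let b : ℂ := (1 - m₂ * (starRingEnd ℂ) m₂) * (starRingEnd ℂ) m₁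
    - (1 - m₁ * (starRingEnd ℂ) m₁) * (starRingEnd ℂ) m₂
  ((a + I * b) / den, (a - I * b) / den)

/-!
With `d = 1 - |μ₁|²|μ₂|²` and `t = 1 + μ₁ μ̄₂`, the conformal coordinates factor as
`A + B = 2 μ̄₁ t / d` and `A - B = 2 μ̄₂ t̄ / d`.
Hence `|A|² - |B|² + 2 = 2 (1 + |μ₁μ₂|²) |t|² / d²`, the discriminant is the perfect square
`(2 |t|² / d)²`, and since `d > 0` the bracket in the inversion formulas is
`4 |μ₁μ₂|² |t|² / d²`. Substituting, the formula for `μ₁` collapses to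
`μ₁ (t̄ - μ̄₁ μ₂ t) / d = μ₁`. Swapping `μ₁ ↔ μ₂` fixes `A` and negates `B`, which exchanges
the two inversion formulas.
-/

open ComplexConjugate

noncomputable def geodA (μ : ℂ × ℂ) : ℂ := ((geodCoord μ).1 + (geodCoord μ).2) / 2

noncomputable def geodB (μ : ℂ × ℂ) : ℂ := ((geodCoord μ).1 - (geodCoord μ).2) / (2 * I)

noncomputable def geodDisc (A B : ℂ) : ℝ :=
  (normSq A - normSq B + 2) ^ 2 - normSq (A - B) * normSq (A + B)

theorem geodDisc_neg_right (A B : ℂ) : geodDisc A (-B) = geodDisc A B := by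
  simp only [geodDisc, normSq_neg, sub_neg_eq_add, ← sub_eq_add_neg, mul_comm]

theorem Complex.ofReal_normSq_sub_normSq (a b : ℂ) :
    ((normSq a - normSq b : ℝ) : ℂ) = ((a + b) * conj (a - b) + conj (a + b) * (a - b)) / 2 := by
  push_cast [← mul_conj, map_add, map_sub]
  ring

theorem Complex.conj_div_mul_normSq_mul (c z w : ℂ) :
    conj z / (c * (normSq z : ℂ)) * w = w / (c * z) := by
  rw [div_eq_mul_inv w, mul_inv, inv_def z]
  push_cast
  ring

section

variable (μ₁ μ₂ : ℂ)

theorem geodA_swap : geodA (μ₂, μ₁) = geodA (μ₁, μ₂) := by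
  simp only [geodA, geodCoord]
  ring

theorem geodB_swap : geodB (μ₂, μ₁) = -geodB (μ₁, μ₂) := by
  simp only [geodB, geodCoord]
  ring

theorem geodA_add_geodB :
    geodA (μ₁, μ₂) + geodB (μ₁, μ₂)
      = 2 * conj μ₁ * (1 + μ₁ * conj μ₂) / (1 - normSq μ₁ * normSq μ₂ : ℝ) := by
  simp only [geodA, geodB, geodCoord]
  push_cast [← mul_conj]
  field_simp
  ring

theorem geodA_sub_geodB :
    geodA (μ₁, μ₂) - geodB (μ₁, μ₂)
      = 2 * conj μ₂ * (1 + μ₂ * conj μ₁) / (1 - normSq μ₁ * normSq μ₂ : ℝ) := by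
  rw [mul_comm (normSq μ₁), ← geodA_add_geodB, geodA_swap μ₁ μ₂, geodB_swap μ₁ μ₂,
    sub_eq_add_neg]

theorem normSq_geodA_sub_normSq_geodB_add_two (hd : normSq μ₁ * normSq μ₂ ≠ 1) :
    normSq (geodA (μ₁, μ₂)) - normSq (geodB (μ₁, μ₂)) + 2
      = 2 * (1 + normSq μ₁ * normSq μ₂) * normSq (1 + μ₁ * conj μ₂)
          / (1 - normSq μ₁ * normSq μ₂) ^ 2 := by
  have h := Complex.ofReal_normSq_sub_normSq (geodA (μ₁, μ₂)) (geodB (μ₁, μ₂))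
  rw [geodA_add_geodB, geodA_sub_geodB] at h
  set d : ℝ := 1 - normSq μ₁ * normSq μ₂ with hd_def
  have hd' : (d : ℂ) ≠ 0 := ofReal_ne_zero.2 (sub_ne_zero.2 hd.symm)
  apply ofReal_injective
  rw [ofReal_add, h]
  simp only [map_add, map_mul, map_div₀, map_one, map_ofNat, conj_conj, conj_ofReal]
  push_cast
  field_simp
  rw [hd_def]
  push_cast [← mul_conj, map_add, map_mul, map_one, conj_conj]
  ring

theorem normSq_geodA_add_geodB :
    normSq (geodA (μ₁, μ₂) + geodB (μ₁, μ₂))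
      = 4 * normSq μ₁ * normSq (1 + μ₁ * conj μ₂) / (1 - normSq μ₁ * normSq μ₂) ^ 2 := by
  rw [geodA_add_geodB, normSq_div, normSq_mul, normSq_mul, normSq_conj, normSq_ofReal]
  norm_num
  ring

theorem normSq_geodA_sub_geodB :
    normSq (geodA (μ₁, μ₂) - geodB (μ₁, μ₂))
      = 4 * normSq μ₂ * normSq (1 + μ₁ * conj μ₂) / (1 - normSq μ₁ * normSq μ₂) ^ 2 := by
  rw [← geodA_swap, sub_eq_add_neg, ← geodB_swap, normSq_geodA_add_geodB, mul_comm (normSq μ₂),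
    ← normSq_conj (1 + μ₂ * conj μ₁)]
  simp only [map_add, map_one, map_mul, conj_conj, mul_comm μ₂]

theorem geodDisc_geodA_geodB (hd : normSq μ₁ * normSq μ₂ ≠ 1) :
    geodDisc (geodA (μ₁, μ₂)) (geodB (μ₁, μ₂))
      = (2 * normSq (1 + μ₁ * conj μ₂) / (1 - normSq μ₁ * normSq μ₂)) ^ 2 := by
  have hd' : 1 - normSq μ₁ * normSq μ₂ ≠ 0 := sub_ne_zero.2 hd.symm
  rw [geodDisc, normSq_geodA_sub_normSq_geodB_add_two μ₁ μ₂ hd, normSq_geodA_add_geodB,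
    normSq_geodA_sub_geodB]
  field_simp
  ring

theorem one_sub_normSq_mul_normSq_pos (hmod : ‖μ₁‖ * ‖μ₂‖ < 1) :
    0 < 1 - normSq μ₁ * normSq μ₂ := by
  rw [normSq_eq_norm_sq, normSq_eq_norm_sq, ← mul_pow, sub_pos]
  exact pow_lt_one₀ (by positivity) hmod two_ne_zero

theorem normSq_geodA_sub_normSq_geodB_add_two_sub_sqrt (hmod : ‖μ₁‖ * ‖μ₂‖ < 1) :
    normSq (geodA (μ₁, μ₂)) - normSq (geodB (μ₁, μ₂)) + 2
        - √(geodDisc (geodA (μ₁, μ₂)) (geodB (μ₁, μ₂)))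
      = 4 * normSq μ₁ * normSq μ₂ * normSq (1 + μ₁ * conj μ₂)
          / (1 - normSq μ₁ * normSq μ₂) ^ 2 := by
  have hd := one_sub_normSq_mul_normSq_pos μ₁ μ₂ hmod
  rw [normSq_geodA_sub_normSq_geodB_add_two μ₁ μ₂ (by linarith), geodDisc_geodA_geodB μ₁ μ₂
    (by linarith), Real.sqrt_sq (div_nonneg (mul_nonneg zero_le_two (normSq_nonneg _)) hd.le)]
  field_simp
  ring

theorem geodCoord_inverse_fst (hmod : ‖μ₁‖ * ‖μ₂‖ < 1)
    (h : geodA (μ₁, μ₂) - geodB (μ₁, μ₂) ≠ 0) :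
    μ₁ = (conj (geodA (μ₁, μ₂)) + conj (geodB (μ₁, μ₂))) / 2
      - (conj (geodA (μ₁, μ₂)) - conj (geodB (μ₁, μ₂)))
          / (2 * (normSq (geodA (μ₁, μ₂) - geodB (μ₁, μ₂)) : ℂ))
        * ((normSq (geodA (μ₁, μ₂)) : ℂ) - (normSq (geodB (μ₁, μ₂)) : ℂ) + 2
          - (√(geodDisc (geodA (μ₁, μ₂)) (geodB (μ₁, μ₂))) : ℂ)) := by
  have hK := congrArg ofReal (normSq_geodA_sub_normSq_geodB_add_two_sub_sqrt μ₁ μ₂ hmod)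
  rw [← map_add, ← map_sub, conj_div_mul_normSq_mul, geodA_add_geodB]
  rw [geodA_sub_geodB] at h ⊢
  obtain ⟨⟨h2μ₂, ht⟩, hd⟩ := And.imp_left mul_ne_zero_iff.1 (div_ne_zero_iff.1 h)
  have hμ₂ := right_ne_zero_of_mul h2μ₂
  set d : ℝ := 1 - normSq μ₁ * normSq μ₂ with hd_def
  push_cast at hK
  rw [hK, ← mul_conj (1 + μ₁ * conj μ₂)]
  simp only [map_add, map_mul, map_div₀, map_one, map_ofNat, conj_conj, conj_ofReal,
    mul_comm (conj μ₁)]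
  field_simp
  rw [hd_def]
  push_cast [← mul_conj]
  ring

end

theorem geodCoord_inverse_formulas
    (μ₁ μ₂ : ℂ) (hmod : ‖μ₁‖ * ‖μ₂‖ < 1) :
    let Z := geodCoord (μ₁, μ₂)
    let A : ℂ := (Z.1 + Z.2) / 2
    let B : ℂ := (Z.1 - Z.2) / (2 * I)
    let D : ℝ := (Complex.normSq A - Complex.normSq B + 2) ^ 2
      - Complex.normSq (A - B) * Complex.normSq (A + B)
    0 ≤ D ∧
    (A - B ≠ 0 →
      μ₁ = ((starRingEnd ℂ) A + (starRingEnd ℂ) B) / 2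
        - ((starRingEnd ℂ) A - (starRingEnd ℂ) B) / (2 * (Complex.normSq (A - B) : ℂ))
          * ((Complex.normSq A : ℂ) - (Complex.normSq B : ℂ) + 2 - (Real.sqrt D : ℂ))) ∧
    (A + B ≠ 0 →
      μ₂ = ((starRingEnd ℂ) A - (starRingEnd ℂ) B) / 2
        - ((starRingEnd ℂ) A + (starRingEnd ℂ) B) / (2 * (Complex.normSq (A + B) : ℂ))
          * ((Complex.normSq A : ℂ) - (Complex.normSq B : ℂ) + 2 - (Real.sqrt D : ℂ))) := by
  show 0 ≤ geodDisc (geodA (μ₁, μ₂)) (geodB (μ₁, μ₂)) ∧ _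
  have hd := one_sub_normSq_mul_normSq_pos μ₁ μ₂ hmod
  refine ⟨geodDisc_geodA_geodB μ₁ μ₂ (by linarith) ▸ sq_nonneg _,
    geodCoord_inverse_fst μ₁ μ₂ hmod, fun h => ?_⟩
  have hswap := geodCoord_inverse_fst μ₂ μ₁ (by rwa [mul_comm])
  rw [geodA_swap, geodB_swap, geodDisc_neg_right] at hswap
  simp only [map_neg, normSq_neg, sub_neg_eq_add, ← sub_eq_add_neg] at hswap
  exact hswap h
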